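/- Let G = NS₂^ℓ × ℤ^p × (ℤ/2ℤ)^q where NS₂ is the Klein bottle group. Then every subgroup H of G satisfies rank(H) ≤ rank(G) = 2ℓ + p + q. -/

import Mathlib

/-- The single defining relator `a b a⁻¹ b` of the Klein bottle group. -/
def kleinRels : Set (FreeGroup (Fin 2)) :=
  {FreeGroup.of 0 * FreeGroup.of 1 * (FreeGroup.of 0)⁻¹ * FreeGroup.of 1}

/-- The Klein bottle group `NS₂ = ⟨a, b ∣ a b a⁻¹ b⟩`. -/
abbrev KleinBottleGroup : Type := PresentedGroup kleinRels

/-- The group `G = NS₂^ℓ × ℤ^p × (ℤ/2ℤ)^q`. -/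
abbrev EuclideanProductGroup (l p q : ℕ) : Type :=
  (Fin l → KleinBottleGroup) × (Fin p → Multiplicative ℤ) ×
    (Fin q → Multiplicative (ZMod 2))

/-!
Subgroup rank is subadditive along an extension `N → G → Q`: a subgroup `H` of `G` is generated
by lifts of generators of its image in `Q` together with generators of `H ⊓ N`. Hence it is
subadditive along direct products. The Klein bottle group is an extension of the cyclic group
`NS₂ ⧸ ⟨b⟩` by its cyclic normal subgroup `⟨b⟩` (as `a b a⁻¹ = b⁻¹`), so its subgroups need at
most two generators, which gives the upper bound `2ℓ + p + q`.

For the lower bound, `G` maps onto the `𝔽₂`-vector space `(𝔽₂²)^ℓ × 𝔽₂^p × 𝔽₂^q` of dimension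
`2ℓ + p + q`, and the image of a generating set of `G` spans it.
-/

open Subgroup Multiplicative

def SubgroupRankLE (G : Type*) [Group G] (n : ℕ) : Prop :=
  ∀ H : Subgroup G, ∃ S : Finset G, S.card ≤ n ∧ closure (S : Set G) = H

section

variable {G Q : Type*} [Group G] [Group Q]

theorem Subgroup.le_of_map_le_of_inf_ker_le {f : G →* Q} {H K : Subgroup G} (hKH : K ≤ H)
    (hmap : H.map f ≤ K.map f) (hker : H ⊓ f.ker ≤ K) : H ≤ K := by
  intro h hh
  obtain ⟨k, hk, hfk⟩ := hmap ⟨h, hh, rfl⟩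
  have hkh : k⁻¹ * h ∈ K :=
    hker ⟨H.mul_mem (H.inv_mem (hKH hk)) hh, by simp [hfk]⟩
  simpa using mul_mem hk hkh

namespace SubgroupRankLE

variable {m n : ℕ}

theorem of_isCyclic [IsCyclic G] : SubgroupRankLE G 1 := by
  intro H
  obtain ⟨g, hg⟩ := H.isCyclic_iff_exists_zpowers_eq_top.1 inferInstance
  exact ⟨{g}, by simp, by rw [Finset.coe_singleton, ← zpowers_eq_closure, hg]⟩

theorem of_injective (f : G →* Q) (hf : Function.Injective f) (h : SubgroupRankLE Q n) :
    SubgroupRankLE G n := by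
  classical
  intro H
  obtain ⟨S, hcard, hS⟩ := h (H.map f)
  have hrange : (S : Set Q) ⊆ Set.range f := fun s hs ↦ by
    obtain ⟨g, -, hg⟩ := hS ▸ subset_closure hs
    exact ⟨g, hg⟩
  refine ⟨S.preimage f hf.injOn, (Finset.card_preimage _ _ _).trans_le ?_, map_injective hf ?_⟩
  · exact (Finset.card_filter_le _ _).trans hcard
  · rw [MonoidHom.map_closure, Finset.coe_preimage, Set.image_preimage_eq_of_subset hrange, hS]

theorem of_ker (f : G →* Q) (hQ : SubgroupRankLE Q m) (hker : SubgroupRankLE f.ker n) :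
    SubgroupRankLE G (m + n) := by
  classical
  intro H
  obtain ⟨T, hTcard, hT⟩ := hQ (H.map f)
  obtain ⟨S, hScard, hS⟩ := hker (H.subgroupOf f.ker)
  have hlift : ∀ t ∈ T, ∃ g ∈ H, f g = t := fun t ht ↦ mem_map.1 (hT ▸ subset_closure ht)
  set lift := Function.invFunOn f H
  set U := T.image lift ∪ S.image f.ker.subtype
  have hUH : closure (U : Set G) ≤ H := by
    rw [closure_le, Finset.coe_union, Set.union_subset_iff, Finset.coe_image, Finset.coe_image]
    refine ⟨?_, ?_⟩
    · rintro _ ⟨t, ht, rfl⟩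
      exact Function.invFunOn_mem (hlift t ht)
    · rintro _ ⟨s, hs, rfl⟩
      exact mem_subgroupOf.1 (show s ∈ H.subgroupOf f.ker from hS ▸ subset_closure hs)
  refine ⟨U, ?_, le_antisymm hUH (le_of_map_le_of_inf_ker_le (f := f) hUH ?_ ?_)⟩
  · calc U.card ≤ T.card + S.card :=
          (Finset.card_union_le _ _).trans (add_le_add Finset.card_image_le Finset.card_image_le)
      _ ≤ m + n := add_le_add hTcard hScard
  · rw [← hT, closure_le]
    intro t ht
    exact ⟨lift t, subset_closure (Finset.mem_union_left _ (Finset.mem_image_of_mem _ ht)),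
      Function.invFunOn_eq (hlift t ht)⟩
  · rw [← subgroupOf_map_subtype, ← hS, MonoidHom.map_closure, ← Finset.coe_image]
    exact closure_mono Finset.subset_union_right

theorem prod {A B : Type*} [Group A] [Group B] (hA : SubgroupRankLE A m)
    (hB : SubgroupRankLE B n) : SubgroupRankLE (A × B) (m + n) := by
  refine of_ker (MonoidHom.fst A B) hA
    (hB.of_injective ((MonoidHom.snd A B).comp (MonoidHom.fst A B).ker.subtype) ?_)
  intro x y hxy
  exact Subtype.ext (Prod.ext (x.2.trans y.2.symm) hxy)

theorem pi (h : SubgroupRankLE G n) : ∀ k : ℕ, SubgroupRankLE (Fin k → G) (k * n)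
  | 0 => fun H ↦ ⟨∅, by simp, by simp [Subsingleton.elim H ⊥]⟩
  | k + 1 => by
    let e : (Fin (k + 1) → G) ≃* G × (Fin k → G) :=
      { (Fin.consEquiv fun _ ↦ G).symm with map_mul' := fun _ _ ↦ rfl }
    rw [add_one_mul, add_comm (k * n)]
    exact (h.prod (pi h k)).of_injective e.toMonoidHom e.injective

end SubgroupRankLE

end

theorem finrank_le_card_of_closure_eq_top {G R V : Type*} [Group G] [Ring R]
    [StrongRankCondition R] [AddCommGroup V] [Module R V] {f : G →* Multiplicative V}
    (hf : Function.Surjective f) {S : Finset G} (hS : closure (S : Set G) = ⊤) :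
    Module.finrank R V ≤ S.card := by
  classical
  set T := S.image fun g ↦ toAdd (f g)
  have hspan : Submodule.span R (T : Set V) = ⊤ := by
    rw [eq_top_iff]
    rintro v -
    obtain ⟨g, hg⟩ := hf (ofAdd v)
    rw [show v = toAdd (f g) by simp [hg]]
    clear hg
    induction (hS ▸ mem_top g : g ∈ closure (S : Set G)) using closure_induction with
    | mem x hx => exact Submodule.subset_span (Finset.mem_coe.2 (Finset.mem_image_of_mem _ hx))
    | one => simp
    | mul x y _ _ hx hy => simpa using add_mem hx hy
    | inv x _ hx => simpa using neg_mem hx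
  calc Module.finrank R V = (T : Set V).finrank R := by
        rw [Set.finrank, hspan, finrank_top]
    _ ≤ T.card := finrank_span_finset_le_card T
    _ ≤ S.card := Finset.card_image_le

namespace KleinBottleGroup

def a : KleinBottleGroup := PresentedGroup.of 0

def b : KleinBottleGroup := PresentedGroup.of 1

theorem a_mul_b_mul_a_inv : a * b * a⁻¹ = b⁻¹ :=
  eq_inv_of_mul_eq_one_left (PresentedGroup.one_of_mem (Set.mem_singleton _))

instance normal_zpowers_b : (zpowers b).Normal := by
  rw [← normalizer_eq_top_iff, eq_top_iff]
  intro g _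
  refine PresentedGroup.generated_by _ _ (fun i ↦ ?_) g
  fin_cases i
  · change a ∈ _
    rw [mem_normalizer_iff_map_conj_eq, MonoidHom.map_zpowers]
    change zpowers (a * b * a⁻¹) = _
    rw [a_mul_b_mul_a_inv, zpowers_inv]
  · exact le_normalizer (mem_zpowers b)

instance isCyclic_quotient_zpowers_b : IsCyclic (KleinBottleGroup ⧸ zpowers b) := by
  refine isCyclic_iff_exists_zpowers_eq_top.2 ⟨(a : KleinBottleGroup ⧸ zpowers b), ?_⟩
  rw [eq_top_iff]
  rintro ⟨g⟩ -
  refine PresentedGroup.generated_by _ ((zpowers _).comap (QuotientGroup.mk' (zpowers b)))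
    (fun i ↦ ?_) g
  fin_cases i
  · exact mem_zpowers _
  · change b ∈ _
    rw [mem_comap, QuotientGroup.mk'_apply, (QuotientGroup.eq_one_iff b).2 (mem_zpowers b)]
    exact one_mem _

theorem subgroupRankLE_two : SubgroupRankLE KleinBottleGroup 2 := by
  refine SubgroupRankLE.of_ker (m := 1) (n := 1) (QuotientGroup.mk' (zpowers b)) .of_isCyclic ?_
  rw [QuotientGroup.ker_mk']
  exact .of_isCyclic

def modTwo : KleinBottleGroup →* Multiplicative (ZMod 2 × ZMod 2) :=
  PresentedGroup.toGroup (f := ![ofAdd (1, 0), ofAdd (0, 1)]) (by rintro _ rfl; decide)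

theorem modTwo_surjective : Function.Surjective modTwo := by
  have hgen : ∀ w : Multiplicative (ZMod 2 × ZMod 2),
      ∃ i j : Fin 2, ofAdd (1, 0) ^ (i : ℕ) * ofAdd (0, 1) ^ (j : ℕ) = w := by decide
  intro w
  obtain ⟨i, j, rfl⟩ := hgen w
  exact ⟨a ^ (i : ℕ) * b ^ (j : ℕ), by simp [modTwo, a, b, PresentedGroup.toGroup.of]⟩

end KleinBottleGroup

namespace EuclideanProductGroup

def modTwo (l p q : ℕ) : EuclideanProductGroup l p q →*
    Multiplicative ((Fin l → ZMod 2 × ZMod 2) × (Fin p → ZMod 2) × (Fin q → ZMod 2)) where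
  toFun g := ofAdd (fun i ↦ toAdd (KleinBottleGroup.modTwo (g.1 i)),
    fun i ↦ ((toAdd (g.2.1 i) : ℤ) : ZMod 2), fun i ↦ toAdd (g.2.2 i))
  map_one' := by ext <;> simp
  map_mul' g h := by ext <;> simp

theorem modTwo_surjective (l p q : ℕ) : Function.Surjective (modTwo l p q) := by
  intro v
  choose k hk using fun i ↦ KleinBottleGroup.modTwo_surjective (ofAdd ((toAdd v).1 i))
  refine ⟨(k, fun i ↦ ofAdd ((toAdd v).2.1 i).val, fun i ↦ ofAdd ((toAdd v).2.2 i)), ?_⟩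
  ext <;> simp [modTwo, hk]

end EuclideanProductGroup

/-- Every subgroup `H` of `G = NS₂^ℓ × ℤ^p × (ℤ/2ℤ)^q` satisfies
`rank H ≤ rank G = 2ℓ + p + q`: every subgroup is generated by at most
`2ℓ + p + q` elements, and `G` itself is not generated by fewer elements. -/
theorem euclidean_rank_bound (l p q : ℕ) :
    (∀ H : Subgroup (EuclideanProductGroup l p q),
      ∃ S : Finset (EuclideanProductGroup l p q),
        S.card ≤ 2 * l + p + q ∧ Subgroup.closure (S : Set (EuclideanProductGroup l p q)) = H) ∧
    ¬ ∃ S : Finset (EuclideanProductGroup l p q),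
        S.card < 2 * l + p + q ∧ Subgroup.closure (S : Set (EuclideanProductGroup l p q)) = ⊤ := by
  refine ⟨?_, ?_⟩
  · have h := (KleinBottleGroup.subgroupRankLE_two.pi l).prod
      ((SubgroupRankLE.of_isCyclic (G := Multiplicative ℤ)).pi p |>.prod
        ((SubgroupRankLE.of_isCyclic (G := Multiplicative (ZMod 2))).pi q))
    rwa [mul_comm l, mul_one, mul_one, ← add_assoc] at h
  · rintro ⟨S, hcard, hS⟩
    have h := finrank_le_card_of_closure_eq_top (R := ZMod 2)
      (EuclideanProductGroup.modTwo_surjective l p q) hS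
    simp only [Module.finrank_prod, Module.finrank_pi_fintype, Module.finrank_self,
      Finset.sum_const, Finset.card_univ, Fintype.card_fin, smul_eq_mul] at h
    omega
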